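/- Assume β > 0, β_year > 0, Cov(Y, ε) = 0, Var(Y) > 0, the Gram determinant Var(ln D)·Var(Y) − Cov(ln D, Y)² is positive, and (b, b_year) satisfies the population normal equations Cov(ln D, ln L) = −b·Var(ln D) − b_year·Cov(ln D, Y) and Cov(Y − Y₀, ln L) = −b·Cov(ln D, Y) − b_year·Var(Y) for ln L generated by the DGP ln L = ln B − β·ln D − β_year·(Y − Y₀) − β·ε. If additionally Var(ln D)·Var(Y) − Cov(ln D, Y)² + Var(Y)·Cov(ln D, ε) > 0 and b ≠ 0, then b_year/b − β_year/β = −(β_year·Var(Y) + β·Cov(ln D, Y))·Cov(ln D, ε) / (β·(Var(ln D)·Var(Y) − Cov(ln D, Y)² + Var(Y)·Cov(ln D, ε))). -/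

import Mathlib

/-! Substituting the data-generating process into the normal equations and expanding the
covariances bilinearly turns them into the linear system
`(b - β) Var(ln D) + (b_year - β_year) Cov(ln D, Y) = β Cov(ln D, ε)`,
`(b - β) Cov(ln D, Y) + (b_year - β_year) Var(Y) = 0`,
whose Gram determinant is positive; Cramer's rule gives `b` and `b_year` explicitly. -/

open MeasureTheory ProbabilityTheory

/-- Covariance of two real-valued random variables with respect to a measure `μ`. -/
noncomputable def cov {Ω : Type*} [MeasurableSpace Ω] (μ : Measure Ω) (X Y : Ω → ℝ) : ℝ :=
  ∫ ω, (X ω - ∫ x, X x ∂μ) * (Y ω - ∫ x, Y x ∂μ) ∂μ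

lemma cov_eq_covariance {Ω : Type*} [MeasurableSpace Ω] (μ : Measure Ω) (X Y : Ω → ℝ) :
    cov μ X Y = covariance X Y μ :=
  rfl

lemma covariance_const_sub_sub_sub {Ω : Type*} [MeasurableSpace Ω] {μ : Measure Ω}
    [IsProbabilityMeasure μ] {W X Y Z : Ω → ℝ} (hW : MemLp W 2 μ) (hX : MemLp X 2 μ)
    (hY : MemLp Y 2 μ) (hZ : MemLp Z 2 μ) (a b c d : ℝ) :
    covariance W (fun ω => a - b * X ω - c * Y ω - d * Z ω) μ =
      -b * covariance W X μ - c * covariance W Y μ - d * covariance W Z μ := by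
  have hbX : MemLp (fun ω => b * X ω) 2 μ := hX.const_mul b
  have haX : MemLp (fun ω => a - b * X ω) 2 μ := (memLp_const a).sub hbX
  have haXY : MemLp (fun ω => a - b * X ω - c * Y ω) 2 μ := haX.sub (hY.const_mul c)
  rw [covariance_fun_sub_right hW haXY (hZ.const_mul d),
    covariance_fun_sub_right hW haX (hY.const_mul c),
    covariance_const_sub_right (hbX.integrable one_le_two),
    covariance_const_mul_right, covariance_const_mul_right, covariance_const_mul_right]
  ring

lemma div_sub_div_of_normal_equations {A C D e β β' b b' : ℝ} (hβ : β ≠ 0)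
    (hG : A * D - C ^ 2 ≠ 0) (hden : A * D - C ^ 2 + D * e ≠ 0)
    (h₁ : -β * A - β' * C - β * e = -b * A - b' * C)
    (h₂ : -β * C - β' * D = -b * C - b' * D) :
    b' / b - β' / β = -((β' * D + β * C) * e) / (β * (A * D - C ^ 2 + D * e)) := by
  have hb : b = β * (A * D - C ^ 2 + D * e) / (A * D - C ^ 2) := by
    field_simp
    linear_combination D * h₁ - C * h₂
  have hb' : b' = β' - β * e * C / (A * D - C ^ 2) := by
    field_simp
    linear_combination A * h₂ - C * h₁
  rw [hb, hb']
  generalize A * D - C ^ 2 = G at hG hden ⊢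
  rw [mul_comm D e] at hden ⊢
  field_simp
  ring

theorem bias_explicit_formula_general {Ω : Type*} [MeasurableSpace Ω] (μ : Measure Ω) [IsProbabilityMeasure μ]
    (X Y ε : Ω → ℝ) (hX : MemLp X 2 μ) (hY : MemLp Y 2 μ) (hε : MemLp ε 2 μ)
    (β β_year lnB Y₀ : ℝ) (lnL : Ω → ℝ)
    (hlnL : ∀ ω, lnL ω = lnB - β * X ω - β_year * (Y ω - Y₀) - β * ε ω)
    (hβ : 0 < β) (hYε : cov μ Y ε = 0)
    (hGram : 0 < variance X μ * variance Y μ - (cov μ X Y) ^ 2)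
    (b b_year : ℝ)
    (h1 : cov μ X lnL = -b * variance X μ - b_year * cov μ X Y)
    (h2 : cov μ (fun ω => Y ω - Y₀) lnL = -b * cov μ X Y - b_year * variance Y μ)
    (hden : 0 < variance X μ * variance Y μ - (cov μ X Y) ^ 2 + variance Y μ * cov μ X ε) :
    b_year / b - β_year / β =
      -((β_year * variance Y μ + β * cov μ X Y) * cov μ X ε) /
        (β * (variance X μ * variance Y μ - (cov μ X Y) ^ 2 + variance Y μ * cov μ X ε)) := by
  have hL : lnL = fun ω => (lnB + β_year * Y₀) - β * X ω - β_year * Y ω - β * ε ω := by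
    funext ω
    rw [hlnL ω]
    ring
  have hXL : cov μ X lnL = -β * variance X μ - β_year * cov μ X Y - β * cov μ X ε := by
    rw [hL, cov_eq_covariance, covariance_const_sub_sub_sub hX hX hY hε,
      covariance_self hX.aemeasurable]
    rfl
  have hYL : cov μ (fun ω => Y ω - Y₀) lnL = -β * cov μ X Y - β_year * variance Y μ := by
    rw [hL, cov_eq_covariance, covariance_sub_const_left (hY.integrable one_le_two),
      covariance_const_sub_sub_sub hY hX hY hε, covariance_self hY.aemeasurable,
      covariance_comm, ← cov_eq_covariance μ Y ε, hYε]
    simp only [cov_eq_covariance]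
    ring
  exact div_sub_div_of_normal_equations hβ.ne' hGram.ne' hden.ne' (hXL ▸ h1) (hYL ▸ h2)

/-- Explicit formula for the bias of the estimated rate of algorithmic progress. -/
theorem bias_explicit_formula {Ω : Type*} [MeasurableSpace Ω] (μ : Measure Ω) [IsProbabilityMeasure μ]
    (X Y ε : Ω → ℝ) (hX : MemLp X 2 μ) (hY : MemLp Y 2 μ) (hε : MemLp ε 2 μ)
    (β β_year lnB Y₀ : ℝ) (lnL : Ω → ℝ)
    (hlnL : ∀ ω, lnL ω = lnB - β * X ω - β_year * (Y ω - Y₀) - β * ε ω)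
    (hβ : 0 < β) (hβyear : 0 < β_year) (hYε : cov μ Y ε = 0)
    (hVarY : 0 < variance Y μ)
    (hGram : 0 < variance X μ * variance Y μ - (cov μ X Y) ^ 2)
    (b b_year : ℝ)
    (h1 : cov μ X lnL = -b * variance X μ - b_year * cov μ X Y)
    (h2 : cov μ (fun ω => Y ω - Y₀) lnL = -b * cov μ X Y - b_year * variance Y μ)
    (hden : 0 < variance X μ * variance Y μ - (cov μ X Y) ^ 2 + variance Y μ * cov μ X ε)
    (hb : b ≠ 0) :
    b_year / b - β_year / β =
      -((β_year * variance Y μ + β * cov μ X Y) * cov μ X ε) /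
        (β * (variance X μ * variance Y μ - (cov μ X Y) ^ 2 + variance Y μ * cov μ X ε)) :=
  bias_explicit_formula_general μ X Y ε hX hY hε β β_year lnB Y₀ lnL hlnL hβ hYε hGram b b_year h1
    h2 hden
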